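/- arXiv:1908.09373 — 3 statements merged into one kernel-verified Lean document; each statement's English description precedes it below -/
import Mathlib

section
/- Let f(c) = log(1 + erf(c)) and define E(c) = −(f(c) + (1/4) f'(c)²). Then E'(c) < 0 for all c ∈ ℝ, i.e., E is strictly decreasing on ℝ and has no critical point. -/
/-!
Write `Φ = 1 + erf` and `φ = Φ' = (2/√π) e^{-c²}`, so that `f' = φ/Φ > 0`, `φ' = -2cφ` and
`2Φ² (1 + f''/2) = u := 2Φ² - φ² - 2cφΦ`. Positivity of `u` propagates down a chain of
derivatives: `u' = 2φ p`, `p' = 2q`, `q' = 2Φ > 0` with `p = (1 + 2c²)Φ + cφ` and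
`q = 2cΦ + φ`. Since `Φ` and `φ` are `O(e^c)` at `-∞`, each of `q`, `p`, `u` tends to `0`
there, and a function with positive derivative that vanishes at `-∞` is positive.
-/

open Real MeasureTheory

/-- The error function `erf x = (2/√π) ∫₀ˣ exp(−t²) dt`. -/
noncomputable def erf (x : ℝ) : ℝ := (2 / Real.sqrt Real.pi) * ∫ t in (0:ℝ)..x, Real.exp (-t^2)

/-- `f(c) = log(1 + erf c)`. -/
noncomputable def fErf (c : ℝ) : ℝ := Real.log (1 + erf c)

/-- `f'(c) = (2/√π) exp(−c²)/(1 + erf c)`. -/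
noncomputable def fErf' (c : ℝ) : ℝ := (2 / Real.sqrt Real.pi) * Real.exp (-c^2) / (1 + erf c)

/-- `f''(c) = −2c f'(c) − f'(c)²`. -/
noncomputable def fErf'' (c : ℝ) : ℝ := -2 * c * fErf' c - (fErf' c)^2

/-- `E(c) = −(f(c) + (1/4) f'(c)²)`. -/
noncomputable def Eerf (c : ℝ) : ℝ := -(fErf c + (1/4) * (fErf' c)^2)

open Filter Set Topology Asymptotics

lemma Real.tendsto_pow_mul_exp_atBot_nhds_zero (n : ℕ) :
    Tendsto (fun x : ℝ => x ^ n * exp x) atBot (𝓝 0) := by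
  have h := ((tendsto_pow_mul_exp_neg_atTop_nhds_zero n).comp tendsto_neg_atBot_atTop).const_mul
    ((-1 : ℝ) ^ n)
  simp only [mul_zero] at h
  refine h.congr fun x => ?_
  simp only [Function.comp_apply, neg_neg, ← mul_assoc, ← mul_pow]
  ring_nf

lemma tendsto_pow_mul_atBot_of_isBigO_exp {g : ℝ → ℝ} (hg : g =O[atBot] exp) (n : ℕ) :
    Tendsto (fun x => x ^ n * g x) atBot (𝓝 0) :=
  ((isBigO_refl (fun x : ℝ => x ^ n) atBot).mul hg).trans_tendsto
    (Real.tendsto_pow_mul_exp_atBot_nhds_zero n)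

lemma pos_of_hasDerivAt_pos_of_tendsto_atBot {F F' : ℝ → ℝ} (hF : ∀ x, HasDerivAt F (F' x) x)
    (hF' : ∀ x, 0 < F' x) (hlim : Tendsto F atBot (𝓝 0)) (x : ℝ) : 0 < F x := by
  have hmono : StrictMono F := strictMono_of_hasDerivAt_pos hF hF'
  have hle : 0 ≤ F (x - 1) :=
    le_of_tendsto hlim <| (eventually_le_atBot (x - 1)).mono fun y hy => hmono.monotone hy
  exact hle.trans_lt (hmono (sub_one_lt x))

noncomputable def erfDeriv (c : ℝ) : ℝ := (2 / √π) * exp (-c ^ 2)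

lemma erfDeriv_pos (c : ℝ) : 0 < erfDeriv c := by
  unfold erfDeriv; positivity

lemma continuous_exp_neg_sq : Continuous fun t : ℝ => exp (-t ^ 2) := by
  fun_prop

lemma integrable_exp_neg_sq : Integrable fun t : ℝ => exp (-t ^ 2) := by
  simpa using integrable_exp_neg_mul_sq one_pos

lemma hasDerivAt_erf (c : ℝ) : HasDerivAt erf (erfDeriv c) c :=
  (intervalIntegral.integral_hasDerivAt_right (continuous_exp_neg_sq.intervalIntegrable _ _)
    (continuous_exp_neg_sq.stronglyMeasurableAtFilter _ _)
    continuous_exp_neg_sq.continuousAt).const_mul _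

lemma hasDerivAt_erfDeriv (c : ℝ) : HasDerivAt erfDeriv (-2 * c * erfDeriv c) c := by
  have hsq : HasDerivAt (fun x : ℝ => -x ^ 2) (-(2 * c)) c := by
    simpa using ((hasDerivAt_pow 2 c).const_mul (-1 : ℝ))
  refine (hsq.exp.const_mul (2 / √π)).congr_deriv ?_
  unfold erfDeriv; ring

lemma integral_exp_neg_sq_Iic_zero : ∫ t in Iic (0 : ℝ), exp (-t ^ 2) = √π / 2 := by
  rw [← neg_zero, ← integral_comp_neg_Ioi]
  simpa using integral_gaussian_Ioi 1

lemma one_add_erf_eq_integral_Iic (c : ℝ) :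
    1 + erf c = (2 / √π) * ∫ t in Iic c, exp (-t ^ 2) := by
  have hsplit := intervalIntegral.integral_Iic_sub_Iic (μ := volume) (a := 0) (b := c)
    integrable_exp_neg_sq.integrableOn integrable_exp_neg_sq.integrableOn
  rw [erf, ← hsplit, integral_exp_neg_sq_Iic_zero, mul_sub, sub_eq_add_neg, add_comm]
  have : (2 / √π) * (√π / 2) = 1 := by field_simp
  rw [this]; ring

lemma one_add_erf_pos (c : ℝ) : 0 < 1 + erf c := by
  rw [one_add_erf_eq_integral_Iic]
  have : NeZero (volume.restrict (Iic c)) := ⟨by simp⟩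
  exact mul_pos (by positivity) (integral_exp_pos integrable_exp_neg_sq.integrableOn)

lemma exp_neg_sq_le_exp {t : ℝ} (ht : t ≤ -1) : exp (-t ^ 2) ≤ exp t :=
  exp_le_exp.2 (by nlinarith)

lemma one_add_erf_le {c : ℝ} (hc : c ≤ -1) : 1 + erf c ≤ (2 / √π) * exp c := by
  rw [one_add_erf_eq_integral_Iic, ← integral_exp_Iic]
  exact mul_le_mul_of_nonneg_left (setIntegral_mono_on integrable_exp_neg_sq.integrableOn
    (integrableOn_exp_Iic c) measurableSet_Iic fun t ht => exp_neg_sq_le_exp (le_trans ht hc))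
    (by positivity)

lemma isBigO_one_add_erf_exp_atBot : (fun c => 1 + erf c) =O[atBot] exp :=
  IsBigO.of_bound _ <| (eventually_le_atBot (-1)).mono fun c hc => by
    rw [norm_of_nonneg (one_add_erf_pos c).le, norm_of_nonneg (exp_pos c).le]
    exact one_add_erf_le hc

lemma isBigO_erfDeriv_exp_atBot : erfDeriv =O[atBot] exp :=
  IsBigO.of_bound (2 / √π) <| (eventually_le_atBot (-1)).mono fun c hc => by
    rw [norm_of_nonneg (erfDeriv_pos c).le, norm_of_nonneg (exp_pos c).le]
    exact mul_le_mul_of_nonneg_left (exp_neg_sq_le_exp hc) (by positivity)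

lemma tendsto_pow_mul_one_add_erf_atBot (n : ℕ) :
    Tendsto (fun c => c ^ n * (1 + erf c)) atBot (𝓝 0) :=
  tendsto_pow_mul_atBot_of_isBigO_exp isBigO_one_add_erf_exp_atBot n

lemma tendsto_pow_mul_erfDeriv_atBot (n : ℕ) :
    Tendsto (fun c => c ^ n * erfDeriv c) atBot (𝓝 0) :=
  tendsto_pow_mul_atBot_of_isBigO_exp isBigO_erfDeriv_exp_atBot n

namespace ErfChain

noncomputable def q (c : ℝ) : ℝ := 2 * c * (1 + erf c) + erfDeriv c

noncomputable def p (c : ℝ) : ℝ := (1 + 2 * c ^ 2) * (1 + erf c) + c * erfDeriv c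

noncomputable def u (c : ℝ) : ℝ :=
  2 * (1 + erf c) ^ 2 - erfDeriv c ^ 2 - 2 * c * erfDeriv c * (1 + erf c)

lemma hasDerivAt_q (c : ℝ) : HasDerivAt q (2 * (1 + erf c)) c := by
  have h := (((hasDerivAt_id c).const_mul 2).mul ((hasDerivAt_erf c).const_add 1)).add
    (hasDerivAt_erfDeriv c)
  refine h.congr_deriv ?_
  simp only [id_eq]; ring

lemma hasDerivAt_p (c : ℝ) : HasDerivAt p (2 * q c) c := by
  have hpoly : HasDerivAt (fun x : ℝ => 1 + 2 * x ^ 2) (4 * c) c := by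
    refine (((hasDerivAt_pow 2 c).const_mul 2).const_add 1).congr_deriv ?_
    ring
  have h := (hpoly.mul ((hasDerivAt_erf c).const_add 1)).add
    ((hasDerivAt_id c).mul (hasDerivAt_erfDeriv c))
  refine h.congr_deriv ?_
  simp only [id_eq, q]; ring

lemma hasDerivAt_u (c : ℝ) : HasDerivAt u (2 * erfDeriv c * p c) c := by
  have hΦ := (hasDerivAt_erf c).const_add 1
  have hφ := hasDerivAt_erfDeriv c
  have h := (((hΦ.pow 2).const_mul 2).sub (hφ.pow 2)).sub
    ((((hasDerivAt_id c).const_mul 2).mul hφ).mul hΦ)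
  refine h.congr_deriv ?_
  simp only [id_eq, Pi.mul_apply, p]; ring

lemma tendsto_q_atBot : Tendsto q atBot (𝓝 0) := by
  have h := ((tendsto_pow_mul_one_add_erf_atBot 1).const_mul 2).add
    (tendsto_pow_mul_erfDeriv_atBot 0)
  simp only [mul_zero, add_zero] at h
  exact h.congr fun c => by simp only [q]; ring

lemma tendsto_p_atBot : Tendsto p atBot (𝓝 0) := by
  have hΦ := tendsto_pow_mul_one_add_erf_atBot
  have h := ((hΦ 0).add ((hΦ 2).const_mul 2)).add (tendsto_pow_mul_erfDeriv_atBot 1)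
  simp only [mul_zero, add_zero] at h
  exact h.congr fun c => by simp only [p]; ring

lemma tendsto_u_atBot : Tendsto u atBot (𝓝 0) := by
  have hΦ := tendsto_pow_mul_one_add_erf_atBot
  have hφ := tendsto_pow_mul_erfDeriv_atBot
  have h := ((((hΦ 0).pow 2).const_mul 2).sub ((hφ 0).pow 2)).sub (((hφ 1).mul (hΦ 0)).const_mul 2)
  simp only [mul_zero, zero_pow two_ne_zero, sub_zero] at h
  exact h.congr fun c => by simp only [u]; ring

lemma q_pos (c : ℝ) : 0 < q c :=
  pos_of_hasDerivAt_pos_of_tendsto_atBot hasDerivAt_q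
    (fun c => mul_pos two_pos (one_add_erf_pos c)) tendsto_q_atBot c

lemma p_pos (c : ℝ) : 0 < p c :=
  pos_of_hasDerivAt_pos_of_tendsto_atBot hasDerivAt_p
    (fun c => mul_pos two_pos (q_pos c)) tendsto_p_atBot c

lemma u_pos (c : ℝ) : 0 < u c :=
  pos_of_hasDerivAt_pos_of_tendsto_atBot hasDerivAt_u
    (fun c => mul_pos (mul_pos two_pos (erfDeriv_pos c)) (p_pos c)) tendsto_u_atBot c

end ErfChain

lemma fErf'_eq (c : ℝ) : fErf' c = erfDeriv c / (1 + erf c) := rfl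

lemma fErf'_pos (c : ℝ) : 0 < fErf' c :=
  div_pos (erfDeriv_pos c) (one_add_erf_pos c)

lemma one_add_half_fErf''_eq (c : ℝ) :
    1 + (1 / 2) * fErf'' c = ErfChain.u c / (2 * (1 + erf c) ^ 2) := by
  have := (one_add_erf_pos c).ne'
  rw [fErf'', fErf'_eq, ErfChain.u]
  field_simp
  ring

lemma one_add_half_fErf''_pos (c : ℝ) : 0 < 1 + (1 / 2) * fErf'' c := by
  rw [one_add_half_fErf''_eq]
  exact div_pos (ErfChain.u_pos c) (by positivity [one_add_erf_pos c])

lemma hasDerivAt_fErf (c : ℝ) : HasDerivAt fErf (fErf' c) c :=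
  ((hasDerivAt_erf c).const_add 1).log (one_add_erf_pos c).ne'

lemma hasDerivAt_fErf' (c : ℝ) : HasDerivAt fErf' (fErf'' c) c := by
  have h := (hasDerivAt_erfDeriv c).div ((hasDerivAt_erf c).const_add 1) (one_add_erf_pos c).ne'
  refine h.congr_deriv ?_
  have := (one_add_erf_pos c).ne'
  rw [fErf'', fErf'_eq]
  field_simp

lemma hasDerivAt_Eerf (c : ℝ) :
    HasDerivAt Eerf (-(fErf' c) * (1 + (1/2) * fErf'' c)) c := by
  have h := ((hasDerivAt_fErf c).add (((hasDerivAt_fErf' c).pow 2).const_mul (1 / 4))).neg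
  refine h.congr_deriv ?_
  ring

/-- `E'(c) = −f'(c)(1 + (1/2) f''(c)) < 0` for all `c ∈ ℝ`, i.e. `E` is
strictly decreasing on `ℝ` (and hence has no critical point). -/
theorem stmt_2 :
    (∀ c : ℝ, HasDerivAt Eerf (-(fErf' c) * (1 + (1/2) * fErf'' c)) c ∧
      -(fErf' c) * (1 + (1/2) * fErf'' c) < 0)
    ∧ StrictAnti Eerf := by
  have hneg (c : ℝ) : -(fErf' c) * (1 + (1/2) * fErf'' c) < 0 :=
    mul_neg_of_neg_of_pos (neg_neg_of_pos (fErf'_pos c)) (one_add_half_fErf''_pos c)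
  exact ⟨fun c => ⟨hasDerivAt_Eerf c, hneg c⟩, strictAnti_of_hasDerivAt_neg hasDerivAt_Eerf hneg⟩
end

section
/- Let ν > 0, c ∈ ℝ, and let ρ_c(x) = A(c) exp(−(x−c)²/(2ν)) on [0,∞) be a truncated Gaussian density with A(c) = (2/√(2πν))/(1 + erf(c/√(2ν))). Define the interaction energy K[ρ_c] = (1/4)∫₀^∞∫₀^∞ (x−y)² ρ_c(x) ρ_c(y) dx dy. Then K[ρ_c] = (1/2)∫₀^∞ (x−c)² ρ_c(x) dx − (ν²/2)(A(c) exp(−c²/(2ν)))². -/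
/-!
Writing `(x - y)² = ((x - c) - (y - c))²` and expanding, the double integral becomes
`2 (M₀ M₂ - M₁²)`, where `Mₖ = ∫₀^∞ (x - c)ᵏ ρ_c(x) dx`. The constant `A(c)` is exactly the one
making `M₀ = 1`, since `∫₀^∞ exp(-(x - c)²/(2ν)) dx = √(2πν)/2 · (1 + erf(c/√(2ν)))`, and the
first moment has the explicit antiderivative `-ν exp(-(x - c)²/(2ν))`, so that
`M₁ = ν A(c) exp(-c²/(2ν))`.
-/

open Real MeasureTheory

/-- The normalization constant `A(c) = (2/√(2πν)) / (1 + erf(c/√(2ν)))`. -/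
noncomputable def Agauss (ν c : ℝ) : ℝ :=
  (2 / Real.sqrt (2 * Real.pi * ν)) / (1 + erf (c / Real.sqrt (2 * ν)))

/-- The truncated shifted Gaussian `ρ_c(x) = A(c) exp(−(x−c)²/(2ν))`. -/
noncomputable def ρc (ν c x : ℝ) : ℝ := Agauss ν c * Real.exp (-(x - c) ^ 2 / (2 * ν))

open Set Filter Topology

theorem hasDerivAt_erf_s7 (x : ℝ) : HasDerivAt erf (2 / √π * exp (-x ^ 2)) x :=
  ((by fun_prop : Continuous fun t : ℝ => exp (-t ^ 2)).integral_hasStrictDerivAt 0 x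
    |>.hasDerivAt.const_mul _)

theorem erf_neg (x : ℝ) : erf (-x) = -erf x := by
  have h := intervalIntegral.integral_comp_neg (a := 0) (b := x) fun t : ℝ => exp (-t ^ 2)
  simp only [neg_sq, neg_zero] at h
  rw [erf, erf, intervalIntegral.integral_symm (-x) 0, ← h]
  ring

theorem tendsto_erf_atTop : Tendsto erf atTop (𝓝 1) := by
  have hint : IntegrableOn (fun t : ℝ => exp (-t ^ 2)) (Ioi 0) := by
    simpa using (integrable_exp_neg_mul_sq one_pos).integrableOn
  have h := (intervalIntegral_tendsto_integral_Ioi 0 hint tendsto_id).const_mul (2 / √π)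
  have hhalf : ∫ t in Ioi (0:ℝ), exp (-t ^ 2) = √π / 2 := by
    simpa using integral_gaussian_Ioi 1
  have hone : 2 / √π * (√π / 2) = 1 := by field_simp
  rwa [hhalf, hone] at h

theorem erf_strictMono : StrictMono erf :=
  strictMono_of_hasDerivAt_pos hasDerivAt_erf_s7 fun x => by positivity

theorem erf_lt_one (x : ℝ) : erf x < 1 :=
  (erf_strictMono (lt_add_one x)).trans_le
    (erf_strictMono.monotone.ge_of_tendsto tendsto_erf_atTop _)

theorem neg_one_lt_erf (x : ℝ) : -1 < erf x := by
  linarith [erf_neg x, erf_lt_one (-x)]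

theorem integrable_sub_pow_mul_exp_neg_sub_sq {ν : ℝ} (hν : 0 < ν) (c : ℝ) (n : ℕ) :
    Integrable fun x : ℝ => (x - c) ^ n * exp (-(x - c) ^ 2 / (2 * ν)) := by
  have h := integrable_rpow_mul_exp_neg_mul_sq (b := (2 * ν)⁻¹) (by positivity)
    (s := n) (by linarith [n.cast_nonneg (α := ℝ)])
  refine (h.comp_sub_right c).congr (ae_of_all _ fun x => ?_)
  simp only [rpow_natCast]
  ring_nf

section HalfLineGaussian

variable {ν : ℝ} (hν : 0 < ν) (c : ℝ)
include hν

theorem integral_Ioi_exp_neg_sub_sq :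
    ∫ x in Ioi (0:ℝ), exp (-(x - c) ^ 2 / (2 * ν))
      = √(2 * π * ν) / 2 * (1 + erf (c / √(2 * ν))) := by
  set s := √(2 * ν)
  have hs : 0 < s := by positivity
  have hs2 : s ^ 2 = 2 * ν := sq_sqrt (by positivity)
  have hπs : √(2 * π * ν) = √π * s := by
    rw [← sqrt_mul pi_pos.le]; ring_nf
  let F x := √(2 * π * ν) / 2 * erf ((x - c) / s)
  have hF : ∀ x ∈ Ici (0:ℝ), HasDerivAt F (exp (-(x - c) ^ 2 / (2 * ν))) x := by
    intro x _
    have h := ((hasDerivAt_erf_s7 _).comp x (((hasDerivAt_id' x).sub_const c).div_const s)).const_mul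
      (√(2 * π * ν) / 2)
    refine h.congr_deriv ?_
    rw [div_pow, hs2, hπs]
    field_simp
  have hlim : Tendsto F atTop (𝓝 (√(2 * π * ν) / 2)) := by
    have harg : Tendsto (fun x => (x - c) / s) atTop atTop :=
      (tendsto_atTop_add_const_right atTop (-c) tendsto_id).atTop_div_const hs
    simpa using (tendsto_erf_atTop.comp harg).const_mul (√(2 * π * ν) / 2)
  rw [integral_Ioi_of_hasDerivAt_of_tendsto' hF
    (by simpa using (integrable_sub_pow_mul_exp_neg_sub_sq hν c 0).integrableOn) hlim]
  simp only [F, zero_sub, neg_div, erf_neg]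
  ring

theorem integral_Ioi_sub_mul_exp_neg_sub_sq :
    ∫ x in Ioi (0:ℝ), (x - c) * exp (-(x - c) ^ 2 / (2 * ν)) = ν * exp (-c ^ 2 / (2 * ν)) := by
  let F x := -ν * exp (-(x - c) ^ 2 / (2 * ν))
  have hF : ∀ x ∈ Ici (0:ℝ), HasDerivAt F ((x - c) * exp (-(x - c) ^ 2 / (2 * ν))) x := by
    intro x _
    have h := ((((hasDerivAt_id' x).sub_const c).fun_pow 2).fun_neg.div_const (2 * ν)).exp
      |>.const_mul (-ν)
    refine h.congr_deriv ?_
    field_simp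
    ring
  have hlim : Tendsto F atTop (𝓝 0) := by
    have hsq : Tendsto (fun x => (x - c) ^ 2 / (2 * ν)) atTop atTop :=
      ((tendsto_pow_atTop two_ne_zero).comp (tendsto_atTop_add_const_right atTop (-c) tendsto_id))
        |>.atTop_div_const (by positivity)
    have h : Tendsto (fun x => -(x - c) ^ 2 / (2 * ν)) atTop atBot := by
      simpa only [neg_div, Function.comp_def] using tendsto_neg_atTop_atBot.comp hsq
    simpa [F] using (tendsto_exp_atBot.comp h).const_mul (-ν)
  rw [integral_Ioi_of_hasDerivAt_of_tendsto' hF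
    (by simpa using (integrable_sub_pow_mul_exp_neg_sub_sq hν c 1).integrableOn) hlim]
  simp only [F, zero_sub, neg_sq]
  ring

end HalfLineGaussian

section Moments

variable {μ : Measure ℝ} {f : ℝ → ℝ} {c : ℝ}
  (h0 : Integrable f μ) (h1 : Integrable (fun x => (x - c) * f x) μ)
  (h2 : Integrable (fun x => (x - c) ^ 2 * f x) μ)
include h0 h1 h2

theorem integral_quadratic_mul (a b d : ℝ) :
    ∫ x, (a + b * (x - c) + d * (x - c) ^ 2) * f x ∂μ
      = a * ∫ x, f x ∂μ + b * ∫ x, (x - c) * f x ∂μ + d * ∫ x, (x - c) ^ 2 * f x ∂μ := by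
  have h01 : Integrable (fun x => a * f x + b * ((x - c) * f x)) μ :=
    (h0.const_mul a).add (h1.const_mul b)
  calc ∫ x, (a + b * (x - c) + d * (x - c) ^ 2) * f x ∂μ
      = ∫ x, a * f x + b * ((x - c) * f x) + d * ((x - c) ^ 2 * f x) ∂μ := by
        congr 1 with x; ring
    _ = _ := by
        rw [integral_add h01 (h2.const_mul d), integral_add (h0.const_mul a) (h1.const_mul b),
          integral_const_mul, integral_const_mul, integral_const_mul]

theorem integral_integral_sub_sq_mul :
    ∫ x, ∫ y, (x - y) ^ 2 * f x * f y ∂μ ∂μ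
      = 2 * ((∫ x, f x ∂μ) * (∫ x, (x - c) ^ 2 * f x ∂μ) - (∫ x, (x - c) * f x ∂μ) ^ 2) := by
  set M₀ := ∫ x, f x ∂μ
  set M₁ := ∫ x, (x - c) * f x ∂μ
  set M₂ := ∫ x, (x - c) ^ 2 * f x ∂μ
  have inner (x : ℝ) : ∫ y, (x - y) ^ 2 * f x * f y ∂μ
      = (M₂ + (-2 * M₁) * (x - c) + M₀ * (x - c) ^ 2) * f x := by
    calc ∫ y, (x - y) ^ 2 * f x * f y ∂μ
        = f x * ∫ y, ((x - c) ^ 2 + (-2 * (x - c)) * (y - c) + 1 * (y - c) ^ 2) * f y ∂μ := by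
          rw [← integral_const_mul]; congr 1 with y; ring
      _ = _ := by rw [integral_quadratic_mul h0 h1 h2]; ring
  simp_rw [inner]
  rw [integral_quadratic_mul h0 h1 h2]
  ring

end Moments

section TruncatedGaussian

variable {ν : ℝ} (hν : 0 < ν) (c : ℝ)
include hν

theorem integrableOn_sub_pow_mul_ρc (n : ℕ) :
    IntegrableOn (fun x => (x - c) ^ n * ρc ν c x) (Ici 0) := by
  refine ((integrable_sub_pow_mul_exp_neg_sub_sq hν c n).const_mul (Agauss ν c)).integrableOn
    |>.congr_fun (fun x _ => ?_) measurableSet_Ici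
  simp only [ρc]; ring

theorem integral_ρc : ∫ x in Ici (0:ℝ), ρc ν c x = 1 := by
  have hD : 1 + erf (c / √(2 * ν)) ≠ 0 := by linarith [neg_one_lt_erf (c / √(2 * ν))]
  simp only [ρc, integral_Ici_eq_integral_Ioi, integral_const_mul,
    integral_Ioi_exp_neg_sub_sq hν, Agauss]
  field_simp

theorem integral_sub_mul_ρc :
    ∫ x in Ici (0:ℝ), (x - c) * ρc ν c x = ν * Agauss ν c * exp (-c ^ 2 / (2 * ν)) := by
  simp only [ρc, mul_left_comm (_ - c), integral_Ici_eq_integral_Ioi, integral_const_mul,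
    integral_Ioi_sub_mul_exp_neg_sub_sq hν]
  ring

end TruncatedGaussian

/-- the interaction energy `K[ρ_c] = (1/4)∫₀^∞∫₀^∞ (x−y)² ρ_c(x) ρ_c(y) dx dy`
satisfies `K[ρ_c] = (1/2)∫₀^∞ (x−c)² ρ_c(x) dx − (ν²/2)(A(c) exp(−c²/(2ν)))²`. -/
theorem stmt_7 (ν c : ℝ) (hν : 0 < ν) :
    (1/4) * ∫ x in Set.Ici (0:ℝ), ∫ y in Set.Ici (0:ℝ), (x - y) ^ 2 * ρc ν c x * ρc ν c y
      = (1/2) * (∫ x in Set.Ici (0:ℝ), (x - c) ^ 2 * ρc ν c x)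
        - (ν ^ 2 / 2) * (Agauss ν c * Real.exp (-c ^ 2 / (2 * ν))) ^ 2 := by
  have hmoment (n : ℕ) := integrableOn_sub_pow_mul_ρc hν c n
  rw [integral_integral_sub_sq_mul (c := c) (by simpa [IntegrableOn] using hmoment 0)
    (by simpa [IntegrableOn] using hmoment 1) (hmoment 2), integral_ρc hν, integral_sub_mul_ρc hν]
  ring
end

section
/- Let D ⊆ ℝ^d be measurable with |D| > 0, ν > 0, and suppose K : ℝ^d → ℝ is locally integrable, even, with K(x) ≤ 2(1−δ₀) f ν log|x| + C₀ for all |x| > R₀, for some δ₀ ∈ (0,1), C₀ ∈ ℝ, R₀ > 0 and f > 0. Suppose further that for every n there exists x_n ∈ D with |D ∩ B_n(x_n)| ≥ (C/2) n^f for some fixed C > 0 and all n larger than some r'. Then, with μ_n the uniform probability density on D_n := D ∩ B_n(x_n), the energy E^ν[μ_n] = (1/(2|D_n|²)) ∫_{D_n}∫_{D_n} K(x−y) dx dy − ν log|D_n| satisfies E^ν[μ_n] → −∞ as n → ∞. -/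
/-!
For `p, q ∈ D_n` we have `‖p - q‖ ≤ 2n`, so `K (p - q) ≤ 2(1-δ₀)fν log (2n) + C₀` unless
`p - q` lies in the ball `B_{R₀}`; by translation invariance the pairs with `p - q ∈ B_{R₀}`
contribute at most `|D_n| ∫_{B_{R₀}} |K|`. Hence the interaction part of `E^ν[μ_n]` is at most
`(1-δ₀)fν log n + O(1)`, while `-ν log |D_n| ≤ -fν log n + O(1)` by the volume lower bound, and
the energy is at most `-δ₀fν log n + O(1)`.
-/

open Real MeasureTheory Filter

open scoped ENNReal

theorem integral_le_toReal_lintegral_ofReal {α : Type*} [MeasurableSpace α] {μ : Measure α}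
    (f : α → ℝ) : ∫ a, f a ∂μ ≤ (∫⁻ a, ENNReal.ofReal (f a) ∂μ).toReal := by
  by_cases hf : Integrable f μ
  · rw [integral_eq_lintegral_pos_part_sub_lintegral_neg_part hf]
    exact sub_le_self _ ENNReal.toReal_nonneg
  · rw [integral_undef hf]
    exact ENNReal.toReal_nonneg

theorem lintegral_restrict_prod_comp_sub_le {G : Type*} [AddGroup G] [MeasurableSpace G]
    [MeasurableAdd G] [MeasurableNeg G] (μ : Measure G) [SFinite μ] [μ.IsAddLeftInvariant]
    [μ.IsNegInvariant] (g : G → ℝ≥0∞) (s : Set G) :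
    ∫⁻ q, g (q.1 - q.2) ∂(μ.restrict s).prod (μ.restrict s) ≤ (∫⁻ z, g z ∂μ) * μ s :=
  calc ∫⁻ q, g (q.1 - q.2) ∂(μ.restrict s).prod (μ.restrict s)
      ≤ ∫⁻ a in s, ∫⁻ b in s, g (a - b) ∂μ ∂μ := lintegral_prod_le _
    _ ≤ ∫⁻ a in s, ∫⁻ b, g (a - b) ∂μ ∂μ :=
        lintegral_mono fun _ ↦ setLIntegral_le_lintegral _ _
    _ = (∫⁻ z, g z ∂μ) * μ s := by
        simp_rw [lintegral_sub_left_eq_self, setLIntegral_const]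

section NormedGroup

variable {E : Type*} [NormedAddCommGroup E]

theorem ofReal_le_add_indicator_closedBall {K : E → ℝ} {R L : ℝ} {z : E}
    (hK : R < ‖z‖ → K z ≤ L) :
    ENNReal.ofReal (K z) ≤
      ENNReal.ofReal L + (Metric.closedBall 0 R).indicator (fun y ↦ ‖K y‖ₑ) z := by
  by_cases hz : R < ‖z‖
  · exact (ENNReal.ofReal_le_ofReal (hK hz)).trans le_self_add
  · rw [Set.indicator_of_mem (by simpa using le_of_not_gt hz)]
    exact (ofReal_le_enorm _).trans le_add_self

variable [MeasurableSpace E] [OpensMeasurableSpace E] [MeasurableAdd E] [MeasurableNeg E]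
  (μ : Measure E) [SFinite μ] [μ.IsAddLeftInvariant] [μ.IsNegInvariant]

theorem setIntegral_prod_comp_sub_le {K : E → ℝ} {s : Set E} {c : E} {r R L : ℝ}
    (hs : s ⊆ Metric.closedBall c r) (hμs : μ s ≠ ∞) (hL : 0 ≤ L)
    (hKL : ∀ z, R < ‖z‖ → ‖z‖ ≤ 2 * r → K z ≤ L)
    (hK : IntegrableOn K (Metric.closedBall 0 R) μ) :
    ∫ q in s ×ˢ s, K (q.1 - q.2) ∂μ.prod μ ≤
      L * μ.real s ^ 2 + (∫⁻ z in Metric.closedBall 0 R, ‖K z‖ₑ ∂μ).toReal * μ.real s := by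
  set g := (Metric.closedBall (0 : E) R).indicator (fun y ↦ ‖K y‖ₑ)
  set M := ∫⁻ z in Metric.closedBall 0 R, ‖K z‖ₑ ∂μ
  have hball : ∀ᵐ q ∂(μ.prod μ).restrict (s ×ˢ s),
      q ∈ Metric.closedBall c r ×ˢ Metric.closedBall c r :=
    ae_restrict_of_ae_restrict_of_subset (Set.prod_mono hs hs)
      (ae_restrict_mem (measurableSet_closedBall.prod measurableSet_closedBall))
  have hpt : ∀ᵐ q ∂(μ.prod μ).restrict (s ×ˢ s),
      ENNReal.ofReal (K (q.1 - q.2)) ≤ ENNReal.ofReal L + g (q.1 - q.2) := by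
    filter_upwards [hball] with q ⟨hq₁, hq₂⟩
    refine ofReal_le_add_indicator_closedBall fun hR ↦ hKL _ hR ?_
    rw [← dist_eq_norm]
    linarith [dist_triangle_right q.1 q.2 c, Metric.mem_closedBall.mp hq₁,
      Metric.mem_closedBall.mp hq₂]
  -- Bounding in `ℝ≥0∞` first needs no integrability of `K (q.1 - q.2)` on `s ×ˢ s`.
  have hlint : ∫⁻ q in s ×ˢ s, ENNReal.ofReal (K (q.1 - q.2)) ∂μ.prod μ ≤
      ENNReal.ofReal L * μ s ^ 2 + M * μ s :=
    calc ∫⁻ q in s ×ˢ s, ENNReal.ofReal (K (q.1 - q.2)) ∂μ.prod μ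
        ≤ ∫⁻ q in s ×ˢ s, (ENNReal.ofReal L + g (q.1 - q.2)) ∂μ.prod μ := lintegral_mono_ae hpt
      _ = ENNReal.ofReal L * μ s ^ 2 +
          ∫⁻ q, g (q.1 - q.2) ∂(μ.restrict s).prod (μ.restrict s) := by
        rw [lintegral_add_left measurable_const, setLIntegral_const, Measure.prod_prod, sq,
          Measure.prod_restrict]
      _ ≤ ENNReal.ofReal L * μ s ^ 2 + M * μ s := by
        grw [lintegral_restrict_prod_comp_sub_le,
          lintegral_indicator measurableSet_closedBall]
  have hM : M ≠ ∞ := hK.2.ne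
  calc ∫ q in s ×ˢ s, K (q.1 - q.2) ∂μ.prod μ
      ≤ (∫⁻ q in s ×ˢ s, ENNReal.ofReal (K (q.1 - q.2)) ∂μ.prod μ).toReal :=
        integral_le_toReal_lintegral_ofReal _
    _ ≤ (ENNReal.ofReal L * μ s ^ 2 + M * μ s).toReal :=
        ENNReal.toReal_mono (by finiteness) hlint
    _ = L * μ.real s ^ 2 + M.toReal * μ.real s := by
        rw [ENNReal.toReal_add (by finiteness) (by finiteness), ENNReal.toReal_mul,
          ENNReal.toReal_mul, ENNReal.toReal_pow, ENNReal.toReal_ofReal hL, measureReal_def]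

end NormedGroup

theorem energy_le_of_volume_ge {ν L M C f n V I : ℝ} (hν : 0 ≤ ν) (hM : 0 ≤ M) (hC : 0 < C)
    (hf : 0 ≤ f) (hn : 1 ≤ n) (hV : C / 2 * n ^ f ≤ V) (hI : I ≤ L * V ^ 2 + M * V) :
    1 / (2 * V ^ 2) * I - ν * log V ≤ L / 2 + M / C - ν * (log (C / 2) + f * log n) := by
  have hVC : C / 2 ≤ V := le_trans (le_mul_of_one_le_right (by positivity) (one_le_rpow hn hf)) hV
  have hV₀ : 0 < V := by linarith
  have hfirst : 1 / (2 * V ^ 2) * I ≤ L / 2 + M / C :=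
    calc 1 / (2 * V ^ 2) * I ≤ 1 / (2 * V ^ 2) * (L * V ^ 2 + M * V) := by gcongr
      _ = L / 2 + M / (2 * V) := by field_simp
      _ ≤ L / 2 + M / C := by gcongr; linarith
  have hlog : log (C / 2) + f * log n ≤ log V := by
    rw [← log_rpow (by linarith), ← log_mul (by positivity) (by positivity)]
    exact log_le_log (by positivity) hV
  nlinarith

theorem stmt_15_general (d : ℕ) (ν δ₀ C₀ R₀ f C r' : ℝ)
    (hν : 0 < ν) (hδ₀ : 0 < δ₀) (hδ₀' : δ₀ < 1) (hR₀ : 0 < R₀) (hf : 0 < f) (hC : 0 < C)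
    (K : EuclideanSpace ℝ (Fin d) → ℝ) (hKloc : LocallyIntegrable K)
    (hKbd : ∀ z : EuclideanSpace ℝ (Fin d), R₀ < ‖z‖ →
      K z ≤ 2 * (1 - δ₀) * f * ν * Real.log ‖z‖ + C₀)
    (D : Set (EuclideanSpace ℝ (Fin d)))
    (x : ℕ → EuclideanSpace ℝ (Fin d))
    (hvol : ∀ n : ℕ, r' < n →
      C / 2 * (n : ℝ) ^ f ≤ (volume (D ∩ Metric.closedBall (x n) n)).toReal) :
    Tendsto (fun n : ℕ =>
        (1 / (2 * (volume (D ∩ Metric.closedBall (x n) n)).toReal ^ 2)) *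
          (∫ q in (D ∩ Metric.closedBall (x n) n) ×ˢ (D ∩ Metric.closedBall (x n) n),
            K (q.1 - q.2))
        - ν * Real.log (volume (D ∩ Metric.closedBall (x n) n)).toReal)
      atTop atBot := by
  set a := 2 * (1 - δ₀) * f * ν
  set M := (∫⁻ z in Metric.closedBall 0 R₀, ‖K z‖ₑ).toReal
  have ha : 0 < a := mul_pos (mul_pos (by linarith) hf) hν
  have hKle (n : ℕ) (z) (hz : R₀ < ‖z‖) (hzn : ‖z‖ ≤ 2 * (n : ℝ)) :
      K z ≤ a * log (2 * n) + C₀ := by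
    grw [hKbd z hz, log_le_log (hR₀.trans hz) hzn]
  have hlin : Tendsto (fun n : ℕ ↦ -(δ₀ * f * ν) * log n +
      ((1 - δ₀) * f * ν * log 2 + C₀ / 2 + M / C - ν * log (C / 2))) atTop atBot :=
    tendsto_atBot_add_const_right _ _ <| (tendsto_const_mul_atBot_of_neg (by
      have := mul_pos (mul_pos hδ₀ hf) hν; linarith)).mpr
      (tendsto_log_atTop.comp tendsto_natCast_atTop_atTop)
  refine tendsto_atBot_mono' atTop ?_ hlin
  have hL : ∀ᶠ n : ℕ in atTop, 0 ≤ a * log (2 * n) + C₀ :=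
    (((tendsto_log_atTop.comp ((tendsto_natCast_atTop_atTop (R := ℝ)).const_mul_atTop
      two_pos)).const_mul_atTop ha).atTop_add tendsto_const_nhds).eventually_ge_atTop 0
  filter_upwards [tendsto_natCast_atTop_atTop.eventually_gt_atTop r', eventually_ge_atTop 1, hL]
    with n hr' hn hLn
  have hn' : (1 : ℝ) ≤ n := by exact_mod_cast hn
  have hI := setIntegral_prod_comp_sub_le volume (s := D ∩ Metric.closedBall (x n) n)
    Set.inter_subset_right (measure_inter_lt_top_of_right_ne_top measure_closedBall_lt_top.ne).ne
    hLn (hKle n) (hKloc.integrableOn_isCompact (isCompact_closedBall _ _))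
  rw [← Measure.volume_eq_prod] at hI
  have := energy_le_of_volume_ge hν.le ENNReal.toReal_nonneg hC hf.le hn' (hvol n hr') hI
  rw [log_mul two_ne_zero (by positivity)] at this
  linarith

/-- diffusion-dominated non-existence. If `K` is locally integrable, even
and bounded above by `2(1−δ₀) f ν log|x| + C₀` for `|x| > R₀`, and the domain `D`
satisfies the effective-volume-dimension lower bound `|D ∩ B_n(x_n)| ≥ (C/2) n^f`
for points `x_n ∈ D` and all large `n`, then the energies of the uniform densities
`μ_n` on `D_n = D ∩ B_n(x_n)`,
`E^ν[μ_n] = (1/(2|D_n|²)) ∫∫_{D_n×D_n} K(x−y) − ν log|D_n|`, tend to `−∞`. -/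
theorem stmt_15 (d : ℕ) (ν δ₀ C₀ R₀ f C r' : ℝ)
    (hν : 0 < ν) (hδ₀ : 0 < δ₀) (hδ₀' : δ₀ < 1) (hR₀ : 0 < R₀) (hf : 0 < f) (hC : 0 < C)
    (K : EuclideanSpace ℝ (Fin d) → ℝ) (hKloc : LocallyIntegrable K)
    (hKeven : ∀ z, K (-z) = K z)
    (hKbd : ∀ z : EuclideanSpace ℝ (Fin d), R₀ < ‖z‖ →
      K z ≤ 2 * (1 - δ₀) * f * ν * Real.log ‖z‖ + C₀)
    (D : Set (EuclideanSpace ℝ (Fin d))) (hD : MeasurableSet D) (hDpos : 0 < volume D)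
    (x : ℕ → EuclideanSpace ℝ (Fin d)) (hx : ∀ n, x n ∈ D)
    (hvol : ∀ n : ℕ, r' < n →
      C / 2 * (n : ℝ) ^ f ≤ (volume (D ∩ Metric.closedBall (x n) n)).toReal) :
    Tendsto (fun n : ℕ =>
        (1 / (2 * (volume (D ∩ Metric.closedBall (x n) n)).toReal ^ 2)) *
          (∫ q in (D ∩ Metric.closedBall (x n) n) ×ˢ (D ∩ Metric.closedBall (x n) n),
            K (q.1 - q.2))
        - ν * Real.log (volume (D ∩ Metric.closedBall (x n) n)).toReal)
      atTop atBot :=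
  stmt_15_general d ν δ₀ C₀ R₀ f C r' hν hδ₀ hδ₀' hR₀ hf hC K hKloc hKbd D x hvol
end
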